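/- For all a, b ∈ ℤY one has θ(S_• * (a / (S_• * b))) = θ(S_• * a) / θ(S_• * b) − θ(S_• * a) * θ(S_• * b), where θ denotes the direct sum of the Coxeter transformations θ_n acting on ℤY. -/

import Mathlib

/-!
Both sides are biadditive in `(a, b)` and the classes `P x` generate `ℤY` (their matrix in the
basis `S` is unitriangular for the Tamari order), so it suffices to take `a = P x`, `b = P y`.
There everything is explicit: `S• * P y = P (|, y)`, `P x / P y = P (x / y)`,
`I (|, x) * I (|, y) = I ((|, x), y)` and `I (|, x) / I (|, y) = I ((|, x), y) - I (|, (x, y))`,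
so both sides equal `-I (|, (x, y))`.

The Tamari combinatorics behind this: the trees below `x / y` are exactly the `u / v` with
`u ≤ x`, `v ≤ y`, and the interval `[• / v, (|, v)]` consists of the trees whose leftmost internal
vertex, once erased, leaves `v`. The product of two `I`'s is brought back to such downsets by the
left-right mirror, which reverses the Tamari order and exchanges `/` and `∖`.
-/

/-- A planar binary tree: either the trivial tree (a leaf) or an ordered pair of
planar binary trees. -/
inductive PBT : Type
  | leaf : PBT
  | node : PBT → PBT → PBT
  deriving DecidableEq

namespace PBT

/-- Number of internal vertices of a planar binary tree. -/
def size : PBT → ℕ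
  | leaf => 0
  | node a b => a.size + b.size + 1

/-- One covering move of the Tamari order: `Rot x y` holds when `y` is obtained
from `x` by replacing some subtree of the form `((a,b),c)` by `(a,(b,c))`. -/
inductive Rot : PBT → PBT → Prop
  | rot (a b c : PBT) : Rot (node (node a b) c) (node a (node b c))
  | left {a a' : PBT} (b : PBT) : Rot a a' → Rot (node a b) (node a' b)
  | right (a : PBT) {b b' : PBT} : Rot b b' → Rot (node a b) (node a b')

/-- The Tamari order: reflexive-transitive closure of `Rot`. -/
def tle (x y : PBT) : Prop := Relation.ReflTransGen Rot x y

/-- Grafting of `x` on the leftmost leaf of `y` : the operation `x / y`. -/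
def overG : PBT → PBT → PBT
  | x, leaf => x
  | x, node y₁ y₂ => node (overG x y₁) y₂

/-- Grafting of `y` on the rightmost leaf of `x` : the operation `x ∖ y`. -/
def under : PBT → PBT → PBT
  | leaf, y => y
  | node x₁ x₂, y => node x₁ (under x₂ y)

theorem Rot.size_eq {x y : PBT} (h : Rot x y) : x.size = y.size := by
  induction h <;> simp [size] <;> omega

theorem tle.size_eq {x y : PBT} (h : tle x y) : x.size = y.size := by
  induction h with
  | refl => rfl
  | tail _ h ih => rw [ih, h.size_eq]

theorem finite_size_le (n : ℕ) : {z : PBT | z.size ≤ n}.Finite := by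
  induction n with
  | zero =>
    apply Set.Finite.subset (Set.finite_singleton leaf)
    rintro (_ | ⟨a, b⟩) hz
    · simp
    · simp [size] at hz
  | succ n ih =>
    apply Set.Finite.subset ((Set.Finite.image2 node ih ih).insert leaf)
    rintro (_ | ⟨a, b⟩) hz
    · simp
    · simp only [Set.mem_setOf_eq, size] at hz
      exact Set.mem_insert_iff.mpr
        (Or.inr (Set.mem_image2.mpr ⟨a, by simp only [Set.mem_setOf_eq]; omega, b, by simp only [Set.mem_setOf_eq]; omega, rfl⟩))

theorem finite_size (n : ℕ) : {z : PBT | z.size = n}.Finite :=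
  (finite_size_le n).subset fun _ hz => le_of_eq hz

theorem finite_tle_right (x : PBT) : {y : PBT | tle y x}.Finite :=
  (finite_size x.size).subset fun _ hy => hy.size_eq

theorem finite_tle_left (x : PBT) : {y : PBT | tle x y}.Finite :=
  (finite_size x.size).subset fun _ hy => hy.size_eq.symm

theorem finite_interval (x y : PBT) :
    {z : PBT | tle (overG x y) z ∧ tle z (under x y)}.Finite :=
  (finite_tle_right (under x y)).subset fun _ hz => hz.2

end PBT

/-- The free abelian group `ℤY = ⊕ₙ ℤYₙ` on the set of all planar binary trees. -/
abbrev ZY : Type := PBT →₀ ℤ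

namespace PBT

/-- The basis element `S_x` of `ℤY`. -/
noncomputable def S (x : PBT) : ZY := Finsupp.single x 1

/-- The class `P_x = ∑_{y ≤ x} S_y` of the projective module. -/
noncomputable def P (x : PBT) : ZY := ∑ y ∈ (finite_tle_right x).toFinset, S y

/-- The class `I_x = ∑_{y ≥ x} S_y` of the injective module. -/
noncomputable def I (x : PBT) : ZY := ∑ y ∈ (finite_tle_left x).toFinset, S y

/-- The Loday-Ronco product on basis elements:
`S_x * S_y = ∑_{x/y ≤ z ≤ x∖y} S_z`. -/
noncomputable def starB (x y : PBT) : ZY := ∑ z ∈ (finite_interval x y).toFinset, S z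

/-- Bilinear extension of a product defined on basis elements. -/
noncomputable def bilin (f : PBT → PBT → ZY) (a b : ZY) : ZY :=
  a.sum fun x ax => b.sum fun y byy => (ax * byy) • f x y

/-- The product `/` on `ℤY`, with `S_x / S_y = S_{x/y}`. -/
noncomputable def overM : ZY → ZY → ZY := bilin fun x y => S (x.overG y)

/-- The product `∖` on `ℤY`, with `S_x ∖ S_y = S_{x∖y}`. -/
noncomputable def underM : ZY → ZY → ZY := bilin fun x y => S (x.under y)

/-- The Loday-Ronco product `*` on `ℤY`. -/
noncomputable def starM : ZY → ZY → ZY := bilin starB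

/-- The unique planar binary tree `•` with one internal vertex. -/
def dot : PBT := node leaf leaf

end PBT

namespace PBT

theorem tle_refl (x : PBT) : tle x x := Relation.ReflTransGen.refl

theorem tle.single {x y : PBT} (h : Rot x y) : tle x y := Relation.ReflTransGen.single h

theorem tle.trans {x y z : PBT} (hxy : tle x y) (hyz : tle y z) : tle x z :=
  Relation.ReflTransGen.trans hxy hyz

theorem tle.map {f : PBT → PBT} (hf : ∀ {x y}, Rot x y → Rot (f x) (f y)) {x y : PBT}
    (h : tle x y) : tle (f x) (f y) :=
  Relation.ReflTransGen.lift f (fun _ _ => hf) _ _ h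

theorem tle_node {a a' b b' : PBT} (ha : tle a a') (hb : tle b b') :
    tle (node a b) (node a' b') :=
  (ha.map (Rot.left b)).trans (hb.map (Rot.right a'))

def leftWeight : PBT → ℕ
  | leaf => 0
  | node a b => leftWeight a + leftWeight b + size a

theorem Rot.leftWeight_lt {x y : PBT} (h : Rot x y) : leftWeight y < leftWeight x := by
  induction h with
  | rot => simp only [leftWeight, size]; omega
  | left _ h _ | right _ h _ => have := h.size_eq; simp only [leftWeight]; omega

theorem tle.leftWeight_le {x y : PBT} (h : tle x y) : leftWeight y ≤ leftWeight x := by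
  induction h with
  | refl => exact le_rfl
  | tail _ h ih => exact h.leftWeight_lt.le.trans ih

theorem tle.antisymm {x y : PBT} (hxy : tle x y) (hyx : tle y x) : x = y := by
  rcases hxy.cases_head with rfl | ⟨z, hxz, hzy⟩
  · rfl
  · have := hxz.leftWeight_lt
    have := tle.leftWeight_le hzy
    have := hyx.leftWeight_le
    omega

theorem Rot.source_ne_leaf {x y : PBT} (h : Rot x y) : x ≠ leaf := by
  rintro rfl; cases h

theorem Rot.target_ne_leaf {x y : PBT} (h : Rot x y) : y ≠ leaf := by
  rintro rfl; cases h

theorem Rot.cases_node_right {z a b : PBT} (h : Rot z (node a b)) :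
    (∃ b₁ b₂, z = node (node a b₁) b₂ ∧ b = node b₁ b₂) ∨
      (∃ a₀, z = node a₀ b ∧ Rot a₀ a) ∨ (∃ b₀, z = node a b₀ ∧ Rot b₀ b) := by
  cases h with
  | rot => exact Or.inl ⟨_, _, rfl, rfl⟩
  | left _ h => exact Or.inr (Or.inl ⟨_, rfl, h⟩)
  | right _ h => exact Or.inr (Or.inr ⟨_, rfl, h⟩)

theorem overG_dot (x : PBT) : overG x dot = node x leaf := rfl

theorem overG_node_leaf (x y : PBT) : overG x (node leaf y) = node x y := rfl

theorem overG_assoc (x y z : PBT) : overG (overG x y) z = overG x (overG y z) := by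
  induction z with
  | leaf => rfl
  | node z₁ z₂ ih _ => simp only [overG, ih]

theorem size_overG (x y : PBT) : (overG x y).size = x.size + y.size := by
  induction y with
  | leaf => rfl
  | node y₁ y₂ ih _ => simp only [overG, size, ih]; omega

theorem overG_ne_leaf {x : PBT} (y : PBT) (hx : x ≠ leaf) : overG x y ≠ leaf := by
  cases y <;> simp [overG, hx]

theorem overG_inj {u u' v v' : PBT} (h : overG u v = overG u' v') (hu : u.size = u'.size) :
    u = u' ∧ v = v' := by
  induction v generalizing v' with
  | leaf =>
    cases v' with
    | leaf => exact ⟨h, rfl⟩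
    | node => have := congrArg size h; simp only [size_overG, size] at this; omega
  | node v₁ v₂ ih _ =>
    cases v' with
    | leaf => have := congrArg size h; simp only [size_overG, size] at this; omega
    | node w₁ w₂ =>
      obtain ⟨h₁, rfl⟩ := node.inj h
      obtain ⟨rfl, rfl⟩ := ih h₁
      exact ⟨rfl, rfl⟩

theorem tle_overG {u u' v v' : PBT} (hu : tle u u') (hv : tle v v') :
    tle (overG u v) (overG u' v') := by
  have hleft : ∀ w, tle (overG u w) (overG u' w) := by
    intro w
    induction w with
    | leaf => exact hu
    | node w₁ w₂ ih _ => exact tle_node ih (tle_refl w₂)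
  have hright : ∀ {w w'}, Rot w w' → Rot (overG u' w) (overG u' w') := by
    intro w w' h
    induction h with
    | rot => exact Rot.rot _ _ _
    | left b _ ih => exact Rot.left b ih
    | right _ h _ => exact Rot.right _ h
  exact (hleft v).trans (hv.map hright)

theorem exists_overG_of_rot {z u v : PBT} (h : Rot z (overG u v)) :
    ∃ u₀ v₀, z = overG u₀ v₀ ∧ tle u₀ u ∧ tle v₀ v := by
  induction v generalizing z with
  | leaf => exact ⟨z, leaf, rfl, tle.single h, tle_refl _⟩
  | node v₁ v₂ ih _ =>
    rcases Rot.cases_node_right h with ⟨b₁, b₂, rfl, rfl⟩ | ⟨z₁, rfl, hz₁⟩ | ⟨z₂, rfl, hz₂⟩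
    · exact ⟨u, node (node v₁ b₁) b₂, rfl, tle_refl u, tle.single (Rot.rot _ _ _)⟩
    · obtain ⟨u₀, v₀, rfl, hu₀, hv₀⟩ := ih hz₁
      exact ⟨u₀, node v₀ v₂, rfl, hu₀, tle_node hv₀ (tle_refl v₂)⟩
    · exact ⟨u, node v₁ z₂, rfl, tle_refl u, tle_node (tle_refl v₁) (tle.single hz₂)⟩

theorem exists_overG_of_tle_overG {z u v : PBT} (h : tle z (overG u v)) :
    ∃ u₀ v₀, z = overG u₀ v₀ ∧ tle u₀ u ∧ tle v₀ v := by
  induction h using Relation.ReflTransGen.head_induction_on with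
  | refl => exact ⟨u, v, rfl, tle_refl u, tle_refl v⟩
  | head hrot _ ih =>
    obtain ⟨u₁, v₁, rfl, hu₁, hv₁⟩ := ih
    obtain ⟨u₀, v₀, rfl, hu₀, hv₀⟩ := exists_overG_of_rot hrot
    exact ⟨u₀, v₀, rfl, hu₀.trans hu₁, hv₀.trans hv₁⟩

theorem overG_tle_overG_iff {p q v w : PBT} (h : p.size = q.size) :
    tle (overG p v) (overG q w) ↔ tle p q ∧ tle v w := by
  refine ⟨fun hle => ?_, fun ⟨hpq, hvw⟩ => tle_overG hpq hvw⟩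
  obtain ⟨q₀, w₀, heq, hq₀, hw₀⟩ := exists_overG_of_tle_overG hle
  obtain ⟨rfl, rfl⟩ := overG_inj heq (h.trans hq₀.size_eq.symm)
  exact ⟨hq₀, hw₀⟩

theorem tle_overG_and_tle_overG_iff {c a b z : PBT} :
    tle (overG c a) z ∧ tle z (overG c b) ↔ ∃ w, z = overG c w ∧ tle a w ∧ tle w b := by
  constructor
  · rintro ⟨hlo, hhi⟩
    obtain ⟨c₀, w, rfl, hc₀, hw⟩ := exists_overG_of_tle_overG hhi
    obtain ⟨hcc₀, haw⟩ := (overG_tle_overG_iff hc₀.size_eq.symm).mp hlo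
    exact ⟨w, by rw [hc₀.antisymm hcc₀], haw, hw⟩
  · rintro ⟨w, rfl, haw, hwb⟩
    exact ⟨tle_overG (tle_refl c) haw, tle_overG (tle_refl c) hwb⟩

noncomputable def downset (x : PBT) : Finset PBT := (finite_tle_right x).toFinset

noncomputable def upset (x : PBT) : Finset PBT := (finite_tle_left x).toFinset

noncomputable def interval (x y : PBT) : Finset PBT := (finite_interval x y).toFinset

theorem P_eq_sum (x : PBT) : P x = ∑ y ∈ downset x, S y := rfl

theorem I_eq_sum (x : PBT) : I x = ∑ y ∈ upset x, S y := rfl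

theorem starB_eq_sum (x y : PBT) : starB x y = ∑ z ∈ interval x y, S z := rfl

@[simp] theorem mem_downset {x y : PBT} : y ∈ downset x ↔ tle y x := Set.Finite.mem_toFinset _

@[simp] theorem mem_upset {x y : PBT} : y ∈ upset x ↔ tle x y := Set.Finite.mem_toFinset _

@[simp] theorem mem_interval {x y z : PBT} :
    z ∈ interval x y ↔ tle (overG x y) z ∧ tle z (under x y) := Set.Finite.mem_toFinset _

def eraseLeftmost : PBT → PBT
  | leaf => leaf
  | node leaf t => t
  | node (node a b) t => node (eraseLeftmost (node a b)) t

theorem eraseLeftmost_node {a : PBT} (t : PBT) (ha : a ≠ leaf) :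
    eraseLeftmost (node a t) = node (eraseLeftmost a) t := by
  cases a with
  | leaf => exact absurd rfl ha
  | node => rfl

theorem Rot.eraseLeftmost_tle {z z' : PBT} (h : Rot z z') :
    tle (eraseLeftmost z) (eraseLeftmost z') := by
  induction h with
  | rot a b c =>
    cases a with
    | leaf => exact tle_refl _
    | node => exact tle.single (Rot.rot _ _ _)
  | left b h ih =>
    rw [eraseLeftmost_node b h.source_ne_leaf, eraseLeftmost_node b h.target_ne_leaf]
    exact tle_node ih (tle_refl b)
  | right a h _ =>
    cases a with
    | leaf => exact tle.single h
    | node => exact tle_node (tle_refl _) (tle.single h)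

theorem tle.eraseLeftmost {z z' : PBT} (h : tle z z') :
    tle (eraseLeftmost z) (eraseLeftmost z') := by
  induction h with
  | refl => exact tle_refl _
  | tail _ h ih => exact ih.trans h.eraseLeftmost_tle

theorem eraseLeftmost_dot_overG (v : PBT) : eraseLeftmost (overG dot v) = v := by
  induction v with
  | leaf => rfl
  | node v₁ v₂ ih _ =>
    rw [overG, eraseLeftmost_node v₂ (overG_ne_leaf v₁ (by simp [dot])), ih]

theorem dot_overG_tle_node_leaf (t : PBT) : tle (overG dot t) (node leaf t) := by
  induction t with
  | leaf => exact tle_refl _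
  | node t₁ t₂ ih _ => exact (tle_node ih (tle_refl t₂)).trans (tle.single (Rot.rot _ _ _))

theorem tle_node_leaf_eraseLeftmost {r : PBT} (hr : r ≠ leaf) :
    tle r (node leaf (eraseLeftmost r)) := by
  induction r with
  | leaf => exact absurd rfl hr
  | node r₁ r₂ ih _ =>
    cases r₁ with
    | leaf => exact tle_refl _
    | node =>
      rw [eraseLeftmost_node r₂ (by simp)]
      exact (tle_node (ih (by simp)) (tle_refl r₂)).trans (tle.single (Rot.rot _ _ _))

theorem dot_overG_eraseLeftmost_tle {r : PBT} (hr : r ≠ leaf) :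
    tle (overG dot (eraseLeftmost r)) r := by
  induction r with
  | leaf => exact absurd rfl hr
  | node r₁ r₂ ih _ =>
    cases r₁ with
    | leaf => exact dot_overG_tle_node_leaf r₂
    | node =>
      rw [eraseLeftmost_node r₂ (by simp)]
      exact tle_node (ih (by simp)) (tle_refl r₂)

theorem tle_node_leaf_left_iff {z v : PBT} :
    tle z (node leaf v) ↔ z ≠ leaf ∧ tle (eraseLeftmost z) v := by
  constructor
  · intro h
    refine ⟨?_, h.eraseLeftmost⟩
    rintro rfl
    simpa [size] using h.size_eq
  · rintro ⟨hz, hv⟩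
    exact (tle_node_leaf_eraseLeftmost hz).trans (tle_node (tle_refl leaf) hv)

theorem mem_interval_dot {v z : PBT} :
    z ∈ interval dot v ↔ z ≠ leaf ∧ eraseLeftmost z = v := by
  rw [mem_interval]
  constructor
  · rintro ⟨hlo, hhi⟩
    obtain ⟨hz, hzv⟩ := tle_node_leaf_left_iff.mp hhi
    have hvz := hlo.eraseLeftmost
    rw [eraseLeftmost_dot_overG] at hvz
    exact ⟨hz, hzv.antisymm hvz⟩
  · rintro ⟨hz, rfl⟩
    exact ⟨dot_overG_eraseLeftmost_tle hz, tle_node_leaf_eraseLeftmost hz⟩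

theorem mem_interval_node_leaf {c q z : PBT} :
    z ∈ interval (node c leaf) q ↔ ∃ w, z = overG c w ∧ w ≠ leaf ∧ eraseLeftmost w = q := by
  -- `node c leaf = c / •`, so this interval is `c / [• / q, (|, q)]`
  rw [mem_interval, ← overG_dot, overG_assoc,
    show under (overG c dot) q = overG c (under dot q) from rfl, tle_overG_and_tle_overG_iff]
  simp only [← mem_interval, mem_interval_dot]

theorem tle_node_leaf_right_iff {z c : PBT} :
    tle z (node c leaf) ↔ ∃ t, z = node t leaf ∧ tle t c := by
  constructor
  · intro h
    obtain ⟨t, d, rfl, ht, hd⟩ := exists_overG_of_tle_overG (v := dot) h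
    have hd : d = dot := by
      have := hd.size_eq
      rcases d with _ | ⟨_ | _, _ | _⟩ <;> simp_all [size, dot]
    exact ⟨t, by rw [hd, overG_dot], ht⟩
  · rintro ⟨t, rfl, ht⟩
    exact tle_node ht (tle_refl leaf)

def mirror : PBT → PBT
  | leaf => leaf
  | node a b => node (mirror b) (mirror a)

@[simp] theorem mirror_mirror (t : PBT) : mirror (mirror t) = t := by
  induction t with
  | leaf => rfl
  | node a b iha ihb => simp [mirror, iha, ihb]

@[simp] theorem size_mirror (t : PBT) : size (mirror t) = size t := by
  induction t with
  | leaf => rfl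
  | node a b iha ihb => simp only [mirror, size, iha, ihb]; omega

theorem Rot.mirror {a b : PBT} (h : Rot a b) : Rot (mirror b) (mirror a) := by
  induction h with
  | rot => exact Rot.rot _ _ _
  | left _ _ ih => exact Rot.right _ ih
  | right _ _ ih => exact Rot.left _ ih

theorem tle.mirror {a b : PBT} (h : tle a b) : tle (mirror b) (mirror a) := by
  induction h with
  | refl => exact tle_refl _
  | tail _ h ih => exact (tle.single h.mirror).trans ih

theorem tle_mirror_iff {a b : PBT} : tle (mirror a) (mirror b) ↔ tle b a :=
  ⟨fun h => by simpa using h.mirror, tle.mirror⟩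

theorem mirror_overG (x y : PBT) : mirror (overG x y) = under (mirror y) (mirror x) := by
  induction y with
  | leaf => rfl
  | node y₁ y₂ ih _ => simp [overG, mirror, under, ih]

theorem mirror_under (x y : PBT) : mirror (under x y) = overG (mirror y) (mirror x) := by
  induction x with
  | leaf => rfl
  | node x₁ x₂ _ ih => simp [under, mirror, overG, ih]

theorem mirror_mem_interval_mirror {u v z : PBT} :
    mirror z ∈ interval (mirror v) (mirror u) ↔ z ∈ interval u v := by
  rw [mem_interval, mem_interval, ← mirror_under, ← mirror_overG, tle_mirror_iff, tle_mirror_iff,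
    and_comm]

theorem node_leaf_left_tle_iff {x z : PBT} :
    tle (node leaf x) z ↔ ∃ u, z = node leaf u ∧ tle x u := by
  constructor
  · intro h
    induction h with
    | refl => exact ⟨x, rfl, tle_refl x⟩
    | tail _ hrot ih =>
      obtain ⟨u, rfl, hu⟩ := ih
      cases hrot with
      | left _ h => cases h
      | right _ h => exact ⟨_, rfl, hu.trans (tle.single h)⟩
  · rintro ⟨u, rfl, hu⟩
    exact tle_node (tle_refl leaf) hu

theorem node_node_leaf_tle_iff {x y z : PBT} :
    tle (node (node leaf x) y) z ↔
      (∃ u v, z = node u v ∧ tle (node leaf x) u ∧ tle y v) ∨ tle (node leaf (node x y)) z := by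
  constructor
  · intro h
    induction h with
    | refl => exact Or.inl ⟨_, _, rfl, tle_refl _, tle_refl _⟩
    | tail _ hrot ih =>
      rcases ih with ⟨u, v, rfl, hu, hv⟩ | h
      · cases hrot with
        | rot _ b c =>
          obtain ⟨u', hu', hxu'⟩ := node_leaf_left_tle_iff.mp hu
          obtain ⟨rfl, rfl⟩ := node.inj hu'
          exact Or.inr (tle_node (tle_refl leaf) (tle_node hxu' hv))
        | left _ h => exact Or.inl ⟨_, _, rfl, hu.trans (tle.single h), hv⟩
        | right _ h => exact Or.inl ⟨_, _, rfl, hu, hv.trans (tle.single h)⟩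
      · exact Or.inr (h.trans (tle.single hrot))
  · rintro (⟨u, v, rfl, hu, hv⟩ | h)
    · exact tle_node hu hv
    · exact (tle.single (Rot.rot leaf x y)).trans h

theorem bilin_add_left (f : PBT → PBT → ZY) (a₁ a₂ b : ZY) :
    bilin f (a₁ + a₂) b = bilin f a₁ b + bilin f a₂ b :=
  Finsupp.sum_add_index' (fun _ => by simp) fun _ _ _ => by
    simp only [add_mul, add_smul, Finsupp.sum_add]

theorem bilin_add_right (f : PBT → PBT → ZY) (a b₁ b₂ : ZY) :
    bilin f a (b₁ + b₂) = bilin f a b₁ + bilin f a b₂ := by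
  simp only [bilin, ← Finsupp.sum_add]
  refine Finsupp.sum_congr fun _ _ => Finsupp.sum_add_index' (fun _ => by simp) fun _ _ _ => ?_
  rw [mul_add, add_smul]

noncomputable def bilinHom (f : PBT → PBT → ZY) : ZY →+ ZY →+ ZY :=
  AddMonoidHom.mk' (fun a => AddMonoidHom.mk' (bilin f a) (bilin_add_right f a))
    fun a₁ a₂ => AddMonoidHom.ext (bilin_add_left f a₁ a₂)

theorem bilinHom_apply (f : PBT → PBT → ZY) (a b : ZY) : bilinHom f a b = bilin f a b := rfl

noncomputable def overHom : ZY →+ ZY →+ ZY := bilinHom fun x y => S (overG x y)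

noncomputable def starHom : ZY →+ ZY →+ ZY := bilinHom starB

theorem overHom_apply (a b : ZY) : overHom a b = overM a b := rfl

theorem starHom_apply (a b : ZY) : starHom a b = starM a b := rfl

theorem overM_neg_neg (a b : ZY) : overM (-a) (-b) = overM a b := by
  simp only [← overHom_apply, map_neg, AddMonoidHom.neg_apply, neg_neg]

theorem starM_neg_neg (a b : ZY) : starM (-a) (-b) = starM a b := by
  simp only [← starHom_apply, map_neg, AddMonoidHom.neg_apply, neg_neg]

theorem bilin_S_S (f : PBT → PBT → ZY) (x y : PBT) : bilin f (S x) (S y) = f x y := by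
  simp [bilin, S, Finsupp.sum_single_index]

theorem bilin_sum_S_sum_S (f : PBT → PBT → ZY) (A B : Finset PBT) :
    bilin f (∑ x ∈ A, S x) (∑ y ∈ B, S y) = ∑ p ∈ A ×ˢ B, f p.1 p.2 := by
  simp only [← bilinHom_apply, map_sum, AddMonoidHom.finsetSum_apply]
  simp only [bilinHom_apply, bilin_S_S, Finset.sum_product]
  exact Finset.sum_comm

theorem overM_sum_S_sum_S {A B : Finset PBT}
    (h : Set.InjOn (fun p : PBT × PBT => overG p.1 p.2) ↑(A ×ˢ B)) :
    overM (∑ x ∈ A, S x) (∑ y ∈ B, S y) =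
      ∑ z ∈ (A ×ˢ B).image (fun p => overG p.1 p.2), S z := by
  rw [overM, bilin_sum_S_sum_S, Finset.sum_image h]

theorem starM_sum_S_sum_S {A B : Finset PBT}
    (h : Set.PairwiseDisjoint ↑(A ×ˢ B) fun p : PBT × PBT => interval p.1 p.2) :
    starM (∑ x ∈ A, S x) (∑ y ∈ B, S y) =
      ∑ z ∈ (A ×ˢ B).biUnion (fun p => interval p.1 p.2), S z := by
  simp only [starM, bilin_sum_S_sum_S, Finset.sum_biUnion h, starB_eq_sum]

theorem S_mem_closure_range_P (t : PBT) : S t ∈ AddSubgroup.closure (Set.range P) := by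
  have hP : S t + ∑ y ∈ (downset t).erase t, S y = P t :=
    Finset.add_sum_erase _ _ (mem_downset.mpr (tle_refl t))
  rw [eq_sub_of_add_eq (hP.trans (P_eq_sum t).symm)]
  exact sub_mem (AddSubgroup.subset_closure ⟨t, rfl⟩)
    (sum_mem fun y hy => S_mem_closure_range_P y)
termination_by (downset t).card
decreasing_by
  obtain ⟨hyt, hy⟩ := Finset.mem_erase.mp hy
  refine Finset.card_lt_card ⟨fun z hz => ?_, fun hsub => hyt ?_⟩
  · exact mem_downset.mpr ((mem_downset.mp hz).trans (mem_downset.mp hy))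
  · exact (mem_downset.mp hy).antisymm (mem_downset.mp (hsub (mem_downset.mpr (tle_refl t))))

theorem closure_range_P_eq_top : AddSubgroup.closure (Set.range P) = ⊤ := by
  refine (AddSubgroup.eq_top_iff' _).mpr fun a => ?_
  induction a using Finsupp.induction with
  | zero => exact zero_mem _
  | single_add x n a _ _ ih =>
    have hsingle : Finsupp.single x n = n • S x := by simp [S]
    exact add_mem (hsingle ▸ zsmul_mem (S_mem_closure_range_P x) n) ih

theorem addMonoidHom_ext₂_P {F G : ZY →+ ZY →+ ZY}
    (h : ∀ x y, F (P x) (P y) = G (P x) (P y)) : F = G :=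
  AddMonoidHom.eq_of_eqOn_dense closure_range_P_eq_top <| by
    rintro _ ⟨x, rfl⟩
    exact AddMonoidHom.eq_of_eqOn_dense closure_range_P_eq_top (by rintro _ ⟨y, rfl⟩; exact h x y)

theorem injOn_overG (n : ℕ) :
    Set.InjOn (fun p : PBT × PBT => overG p.1 p.2) {p | p.1.size = n} := by
  rintro ⟨u, v⟩ hu ⟨u', v'⟩ hu' h
  obtain ⟨rfl, rfl⟩ := overG_inj h (hu.trans hu'.symm)
  rfl

theorem overM_P_P (x y : PBT) : overM (P x) (P y) = P (overG x y) := by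
  have hinj : Set.InjOn (fun p : PBT × PBT => overG p.1 p.2) ↑(downset x ×ˢ downset y) :=
    (injOn_overG x.size).mono fun p hp => (mem_downset.mp (Finset.mem_product.mp hp).1).size_eq
  simp only [P_eq_sum]
  rw [overM_sum_S_sum_S hinj]
  congr 1
  ext z
  simp only [Finset.mem_image, Finset.mem_product, mem_downset, Prod.exists]
  constructor
  · rintro ⟨u, v, ⟨hu, hv⟩, rfl⟩
    exact tle_overG hu hv
  · intro h
    obtain ⟨u, v, rfl, hu, hv⟩ := exists_overG_of_tle_overG h
    exact ⟨u, v, ⟨hu, hv⟩, rfl⟩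

theorem starM_S_dot_P (y : PBT) : starM (S dot) (P y) = P (node leaf y) := by
  have hdisj : Set.PairwiseDisjoint ↑({dot} ×ˢ downset y)
      fun p : PBT × PBT => interval p.1 p.2 := by
    refine Finset.pairwiseDisjoint_iff.mpr ?_
    rintro ⟨_, v⟩ hv ⟨_, v'⟩ hv' ⟨z, hz⟩
    simp only [Finset.coe_product, Set.mem_prod, Finset.coe_singleton,
      Set.mem_singleton_iff] at hv hv'
    obtain ⟨rfl, -⟩ := hv
    obtain ⟨rfl, -⟩ := hv'
    simp only [Finset.mem_inter, mem_interval_dot] at hz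
    rw [← hz.1.2, ← hz.2.2]
  simp only [P_eq_sum]
  rw [← Finset.sum_singleton S dot, starM_sum_S_sum_S hdisj]
  congr 1
  ext z
  simp only [Finset.mem_biUnion, Finset.mem_product, Finset.mem_singleton, mem_downset,
    Prod.exists, tle_node_leaf_left_iff]
  constructor
  · rintro ⟨_, v, ⟨rfl, hv⟩, hz⟩
    obtain ⟨hz₀, rfl⟩ := mem_interval_dot.mp hz
    exact ⟨hz₀, hv⟩
  · rintro ⟨hz, hv⟩
    exact ⟨dot, _, ⟨rfl, hv⟩, mem_interval_dot.mpr ⟨hz, rfl⟩⟩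

theorem mirror_injective : Function.Injective mirror :=
  Function.LeftInverse.injective mirror_mirror

theorem mem_interval_node_leaf_node_leaf {u v z : PBT} :
    z ∈ interval (node leaf u) (node leaf v) ↔
      ∃ w, mirror z = overG (mirror v) w ∧ w ≠ leaf ∧
        eraseLeftmost w = node (mirror u) leaf := by
  rw [← mirror_mem_interval_mirror]
  exact mem_interval_node_leaf

theorem eq_of_mem_interval_node_leaf_node_leaf {u v u' v' z : PBT}
    (hz : z ∈ interval (node leaf u) (node leaf v))
    (hz' : z ∈ interval (node leaf u') (node leaf v')) (hv : v.size = v'.size) :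
    u = u' ∧ v = v' := by
  obtain ⟨w, hw, -, hdel⟩ := mem_interval_node_leaf_node_leaf.mp hz
  obtain ⟨w', hw', -, hdel'⟩ := mem_interval_node_leaf_node_leaf.mp hz'
  obtain ⟨hvv', rfl⟩ := overG_inj (hw.symm.trans hw') (by simpa using hv)
  exact ⟨mirror_injective (node.inj (hdel.symm.trans hdel')).1, mirror_injective hvv'⟩

theorem exists_mem_interval_node_leaf_node_leaf_iff {x y z : PBT} :
    (∃ u v, tle x u ∧ tle y v ∧ z ∈ interval (node leaf u) (node leaf v)) ↔
      tle (node (node leaf x) y) z := by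
  rw [← tle_mirror_iff, show mirror (node (node leaf x) y) =
    overG (mirror y) (node leaf (node (mirror x) leaf)) from rfl]
  constructor
  · rintro ⟨u, v, hu, hv, hz⟩
    obtain ⟨w, hw, hw₀, hdel⟩ := mem_interval_node_leaf_node_leaf.mp hz
    rw [hw]
    refine tle_overG hv.mirror (tle_node_leaf_left_iff.mpr ⟨hw₀, ?_⟩)
    rw [hdel]
    exact tle_node hu.mirror (tle_refl leaf)
  · intro h
    obtain ⟨c, w, hz, hc, hw⟩ := exists_overG_of_tle_overG h
    obtain ⟨hw₀, hdel⟩ := tle_node_leaf_left_iff.mp hw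
    obtain ⟨t, hdel, ht⟩ := tle_node_leaf_right_iff.mp hdel
    refine ⟨mirror t, mirror c, by simpa using ht.mirror, by simpa using hc.mirror, ?_⟩
    exact mem_interval_node_leaf_node_leaf.mpr
      ⟨w, by rw [hz, mirror_mirror], hw₀, by rw [hdel, mirror_mirror]⟩

theorem starM_I_I (x y : PBT) :
    starM (I (node leaf x)) (I (node leaf y)) = I (node (node leaf x) y) := by
  have hdisj : Set.PairwiseDisjoint ↑(upset (node leaf x) ×ˢ upset (node leaf y))
      fun p : PBT × PBT => interval p.1 p.2 := by
    refine Finset.pairwiseDisjoint_iff.mpr ?_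
    rintro ⟨_, _⟩ hp ⟨_, _⟩ hp' ⟨z, hz⟩
    simp only [Finset.coe_product, Set.mem_prod, Finset.mem_coe, mem_upset,
      node_leaf_left_tle_iff] at hp hp'
    obtain ⟨⟨u, rfl, -⟩, ⟨v, rfl, hv⟩⟩ := hp
    obtain ⟨⟨u', rfl, -⟩, ⟨v', rfl, hv'⟩⟩ := hp'
    obtain ⟨rfl, rfl⟩ := eq_of_mem_interval_node_leaf_node_leaf (Finset.mem_inter.mp hz).1
      (Finset.mem_inter.mp hz).2 (hv.size_eq.symm.trans hv'.size_eq)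
    rfl
  simp only [I_eq_sum]
  rw [starM_sum_S_sum_S hdisj]
  congr 1
  ext z
  simp only [Finset.mem_biUnion, Finset.mem_product, mem_upset, Prod.exists,
    node_leaf_left_tle_iff, ← exists_mem_interval_node_leaf_node_leaf_iff]
  constructor
  · rintro ⟨_, _, ⟨⟨u, rfl, hu⟩, ⟨v, rfl, hv⟩⟩, hz⟩
    exact ⟨u, v, hu, hv, hz⟩
  · rintro ⟨u, v, hu, hv, hz⟩
    exact ⟨_, _, ⟨⟨u, rfl, hu⟩, ⟨v, rfl, hv⟩⟩, hz⟩

theorem overM_I_I (x y : PBT) :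
    overM (I (node leaf x)) (I (node leaf y)) =
      I (node (node leaf x) y) - I (node leaf (node x y)) := by
  have hinj : Set.InjOn (fun p : PBT × PBT => overG p.1 p.2)
      ↑(upset (node leaf x) ×ˢ upset (node leaf y)) :=
    (injOn_overG (node leaf x).size).mono fun p hp =>
      (mem_upset.mp (Finset.mem_product.mp hp).1).size_eq.symm
  have hsub : upset (node leaf (node x y)) ⊆ upset (node (node leaf x) y) := fun z hz =>
    mem_upset.mpr ((tle.single (Rot.rot leaf x y)).trans (mem_upset.mp hz))
  simp only [I_eq_sum]
  rw [overM_sum_S_sum_S hinj, ← Finset.sum_sdiff_eq_sub hsub]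
  congr 1
  ext z
  simp only [Finset.mem_image, Finset.mem_product, Finset.mem_sdiff, mem_upset, Prod.exists]
  constructor
  · rintro ⟨u, _, ⟨hu, hY⟩, rfl⟩
    obtain ⟨v, rfl, hv⟩ := node_leaf_left_tle_iff.mp hY
    refine ⟨tle_node hu hv, fun h => ?_⟩
    obtain ⟨_, heq, -⟩ := node_leaf_left_tle_iff.mp h
    have := congrArg size (node.inj heq).1
    simp [overG, size, ← hu.size_eq] at this
  · rintro ⟨hN, hM⟩
    rcases node_node_leaf_tle_iff.mp hN with ⟨u, v, rfl, hu, hv⟩ | h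
    · exact ⟨u, node leaf v, ⟨hu, tle_node (tle_refl leaf) hv⟩, rfl⟩
    · exact absurd h hM

theorem coxeter_transformation_carac2_P (θ : ZY →+ ZY) (hθ : ∀ x : PBT, θ (P x) = - I x)
    (x y : PBT) :
    θ (starM (S dot) (overM (P x) (starM (S dot) (P y)))) =
      overM (θ (starM (S dot) (P x))) (θ (starM (S dot) (P y)))
        - starM (θ (starM (S dot) (P x))) (θ (starM (S dot) (P y))) := by
  simp only [starM_S_dot_P, overM_P_P, overG_node_leaf, hθ, overM_neg_neg, starM_neg_neg,
    overM_I_I, starM_I_I]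
  abel

end PBT

open PBT in
/-- The Coxeter transformation `θ` satisfies
`θ(S_• * (a / (S_• * b))) = θ(S_• * a) / θ(S_• * b) − θ(S_• * a) * θ(S_• * b)`. -/
theorem coxeter_transformation_carac2 (θ : ZY →+ ZY)
    (hθ : ∀ x : PBT, θ (P x) = - I x) (a b : ZY) :
    θ (starM (S dot) (overM a (starM (S dot) b))) =
      overM (θ (starM (S dot) a)) (θ (starM (S dot) b))
        - starM (θ (starM (S dot) a)) (θ (starM (S dot) b)) := by
  let σ : ZY →+ ZY := θ.comp (starHom (S dot))
  -- the two sides, as biadditive maps of `(a, b)`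
  have h : (overHom.compl₂ (starHom (S dot))).compr₂ σ =
      ((overHom - starHom).compl₂ σ).comp σ :=
    addMonoidHom_ext₂_P (coxeter_transformation_carac2_P θ hθ)
  exact congrArg (fun F : ZY →+ ZY →+ ZY => F a b) h
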